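/- arXiv:2203.14997 — 3 statements merged into one kernel-verified Lean document; each statement's English description precedes it below -/
import Mathlib

section
/- Let S be a GPT state space in ℝ^{d+1}. Given a minimal exposed face M of S, there exists an actual face F of the unrestricted effect space E(S) such that (i) F = {e ∈ E(S) : e·ω = 1 for all ω ∈ M}, and (ii) F = A^{E(S)}_ω for every ω ∈ M. -/
namespace GPT

/-- Euclidean dot product on `Fin n → ℝ`. -/
def dot {n : ℕ} (x y : Fin n → ℝ) : ℝ := ∑ i, x i * y i

/-- The unit effect `u = (0, …, 0, 1)` in `ℝ^{d+1}`. -/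
def unit (d : ℕ) : Fin (d + 1) → ℝ := fun i => if i = Fin.last d then 1 else 0

/-- A GPT state space: a nonempty compact convex subset of `ℝ^{d+1}` whose elements all have
last coordinate equal to `1`. -/
def IsStateSpace (d : ℕ) (S : Set (Fin (d + 1) → ℝ)) : Prop :=
  S.Nonempty ∧ IsCompact S ∧ Convex ℝ S ∧ ∀ ω ∈ S, ω (Fin.last d) = 1

/-- The unrestricted effect space `E(S)` of a state space `S`. -/
def unrestricted (d : ℕ) (S : Set (Fin (d + 1) → ℝ)) : Set (Fin (d + 1) → ℝ) :=
  {e | ∀ ω ∈ S, 0 ≤ dot e ω ∧ dot e ω ≤ 1}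

/-- A GPT effect space for the state space `S`. -/
def IsEffectSpace (d : ℕ) (S E : Set (Fin (d + 1) → ℝ)) : Prop :=
  E ⊆ unrestricted d S ∧ Convex ℝ E ∧ (0 : Fin (d + 1) → ℝ) ∈ E ∧ unit d ∈ E ∧
    (∀ e ∈ E, unit d - e ∈ E) ∧ Submodule.span ℝ E = ⊤

/-- `W(𝓔)`: the set of all mathematically reasonable states for the effect space `𝓔`. -/
def W (d : ℕ) (E : Set (Fin (d + 1) → ℝ)) : Set (Fin (d + 1) → ℝ) :=
  {ω | (∀ e ∈ E, dot ω e ≤ 1) ∧ dot ω (unit d) = 1}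

/-- The actual set `A^X_ω` of `ω` in a set of effects `X`. -/
def actualSet {n : ℕ} (X : Set (Fin n → ℝ)) (ω : Fin n → ℝ) : Set (Fin n → ℝ) :=
  {e ∈ X | dot e ω = 1}

/-- An exposed face of a convex set `C`: a nonempty set of the form
`C ∩ {x : h·x = m}` with `h ≠ 0` and `h·c ≤ m` for all `c ∈ C`. -/
def IsExposedFace {n : ℕ} (C F : Set (Fin n → ℝ)) : Prop :=
  F.Nonempty ∧ ∃ (h : Fin n → ℝ) (m : ℝ), h ≠ 0 ∧ (∀ c ∈ C, dot h c ≤ m) ∧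
    F = {x ∈ C | dot h x = m}

/-- An exposed point of a convex set. -/
def IsExposedPoint {n : ℕ} (C : Set (Fin n → ℝ)) (x : Fin n → ℝ) : Prop :=
  IsExposedFace C {x}

/-- An actual face of an effect space `E`: an exposed face containing the unit effect that is
maximal among exposed faces. -/
def IsActualFace (d : ℕ) (E F : Set (Fin (d + 1) → ℝ)) : Prop :=
  IsExposedFace E F ∧ unit d ∈ F ∧ ∀ F', IsExposedFace E F' → ¬F ⊂ F'

/-- A minimal exposed face of a convex set. -/
def IsMinimalExposedFace {n : ℕ} (C M : Set (Fin n → ℝ)) : Prop :=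
  IsExposedFace C M ∧ ∀ N, IsExposedFace C N → M ∩ N = M ∨ M ∩ N = ∅

/-- Intermediate determinism: every extreme (pure) state of `S` is uniquely identified among
states in `S` by its actual set of effects in `𝓔`. -/
def IntermediateDeterminism (d : ℕ) (S E : Set (Fin (d + 1) → ℝ)) : Prop :=
  ∀ ω ∈ S.extremePoints ℝ, ∀ ω' ∈ S, actualSet E ω' = actualSet E ω → ω' = ω

end GPT

namespace GPT

variable {n : ℕ}
lemma dot_comm (x y : Fin n → ℝ) : dot x y = dot y x := by simp [dot, mul_comm]
lemma dot_add_left (x y z : Fin n → ℝ) : dot (x + y) z = dot x z + dot y z := by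
  simp [dot, add_mul, Finset.sum_add_distrib]
lemma dot_sub_left (x y z : Fin n → ℝ) : dot (x - y) z = dot x z - dot y z := by
  simp [dot, sub_mul, Finset.sum_sub_distrib]
lemma dot_smul_left (c : ℝ) (x y : Fin n → ℝ) : dot (c • x) y = c * dot x y := by
  simp [dot, Finset.mul_sum, mul_assoc]
lemma dot_sub_right (x y z : Fin n → ℝ) : dot x (y - z) = dot x y - dot x z := by
  simp [dot, mul_sub, Finset.sum_sub_distrib]
lemma dot_zero_left (y : Fin n → ℝ) : dot (0 : Fin n → ℝ) y = 0 := by simp [dot]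
lemma dot_unit_left (d : ℕ) (x : Fin (d+1) → ℝ) : dot (unit d) x = x (Fin.last d) := by
  simp [dot, unit, ite_mul]
lemma dot_unit_right (d : ℕ) (x : Fin (d+1) → ℝ) : dot x (unit d) = x (Fin.last d) := by
  simp [dot, unit, mul_ite]
lemma dot_single_right (x : Fin n → ℝ) (j : Fin n) : dot x (Pi.single j (1:ℝ)) = x j := by
  simp [dot, Pi.single_apply, mul_ite]
lemma dot_continuous (g : Fin n → ℝ) : Continuous fun x : Fin n → ℝ => dot g x := by
  unfold dot; exact continuous_finset_sum _ fun i _ => continuous_const.mul (continuous_apply i)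
lemma clm_eq_dot (f : (Fin n → ℝ) →L[ℝ] ℝ) (a : Fin n → ℝ) :
    f a = dot (fun i => f (Pi.single i 1)) a := by
  conv_lhs => rw [← Finset.univ_sum_single a]
  rw [map_sum]
  have h1 : ∀ i, f (Pi.single i (a i)) = a i * f (Pi.single i 1) := by
    intro i
    have : (Pi.single i (a i) : Fin n → ℝ) = a i • (Pi.single i (1:ℝ) : Fin n → ℝ) := by
      funext j; simp [Pi.single_apply, mul_ite]
    rw [this, map_smul, smul_eq_mul]
  rw [Finset.sum_congr rfl fun i _ => h1 i]
  simp [dot, mul_comm]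

lemma unit_mem_unrestricted {d : ℕ} {S : Set (Fin (d+1) → ℝ)} (hlast : ∀ ω ∈ S, ω (Fin.last d) = 1) :
    unit d ∈ unrestricted d S := by
  intro σ hσ
  rw [dot_unit_left, hlast σ hσ]
  norm_num

lemma mem_of_dual {d : ℕ} {S : Set (Fin (d+1) → ℝ)} (hS : IsStateSpace d S)
    {z : Fin (d+1) → ℝ} (hz1 : ∀ e ∈ unrestricted d S, dot e z ≤ 1)
    (hz2 : z (Fin.last d) = 1) : z ∈ S := by
  obtain ⟨hne, hcomp, hconv, hlast⟩ := hS
  by_contra hzS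
  obtain ⟨f, c, hfc, hcz⟩ := geometric_hahn_banach_closed_point hconv hcomp.isClosed hzS
  set g : Fin (d+1) → ℝ := fun i => f (Pi.single i 1) with hg
  have hfg : ∀ a : Fin (d+1) → ℝ, f a = dot g a := fun a => clm_eq_dot f a
  obtain ⟨σ0, hσ0, hmin⟩ := hcomp.exists_isMinOn hne f.continuous.continuousOn
  set B := c - f σ0 with hB
  have hBpos : 0 < B := sub_pos.2 (hfc σ0 hσ0)
  set t := B⁻¹ with ht
  have htpos : 0 < t := inv_pos.2 hBpos
  have htB : t * B = 1 := inv_mul_cancel₀ hBpos.ne'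
  set e := unit d + t • (g - c • unit d) with he
  have hdote : ∀ x : Fin (d+1) → ℝ, dot e x = x (Fin.last d) + t * (f x - c * x (Fin.last d)) := by
    intro x
    rw [he, dot_add_left, dot_smul_left, dot_sub_left, dot_smul_left, dot_unit_left, ← hfg]
  have heE : e ∈ unrestricted d S := by
    intro σ hσ
    rw [hdote, hlast σ hσ]
    have h1 : f σ < c := hfc σ hσ
    have h2 : f σ0 ≤ f σ := hmin hσ
    constructor <;> nlinarith
  have := hz1 e heE
  rw [hdote, hz2] at this
  nlinarith

lemma exposed_effect {d : ℕ} {S : Set (Fin (d+1) → ℝ)} (hS : IsStateSpace d S)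
    {M : Set (Fin (d+1) → ℝ)} (hM : IsExposedFace S M) :
    ∃ e ∈ unrestricted d S, ∀ σ ∈ S, (σ ∈ M ↔ dot e σ = 1) := by
  obtain ⟨hne, hcomp, hconv, hlast⟩ := hS
  obtain ⟨hMne, g, μ, hg0, hgle, hMeq⟩ := hM
  obtain ⟨σ0, hσ0, hmin⟩ := hcomp.exists_isMinOn hne (dot_continuous g).continuousOn
  by_cases hμ : dot g σ0 = μ
  · refine ⟨unit d, unit_mem_unrestricted hlast, fun σ hσ => ?_⟩
    have h1 : dot g σ = μ := le_antisymm (hgle σ hσ) (hμ ▸ hmin hσ)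
    rw [dot_unit_left, hlast σ hσ, hMeq]
    simp [hσ, h1]
  · have hlt : dot g σ0 < μ := lt_of_le_of_ne (hgle σ0 hσ0) hμ
    set μ' := dot g σ0 with hμ'
    have hpos : 0 < μ - μ' := sub_pos.2 hlt
    set e := (μ - μ')⁻¹ • (g - μ' • unit d) with he
    have hdote : ∀ σ ∈ S, dot e σ = (dot g σ - μ') / (μ - μ') := by
      intro σ hσ
      rw [he, dot_smul_left, dot_sub_left, dot_smul_left, dot_unit_left, hlast σ hσ,
        mul_one, div_eq_inv_mul]
    refine ⟨e, fun σ hσ => ?_, fun σ hσ => ?_⟩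
    · rw [hdote σ hσ]
      have h2 : μ' ≤ dot g σ := hmin hσ
      have h3 : dot g σ ≤ μ := hgle σ hσ
      constructor
      · exact div_nonneg (by linarith) hpos.le
      · rw [div_le_one hpos]; linarith
    · rw [hdote σ hσ, div_eq_one_iff_eq hpos.ne', hMeq]
      simp only [Set.mem_setOf_eq, hσ, true_and]
      constructor <;> intro h <;> linarith
end GPT

open GPT in
/-- Given a minimal exposed face `M` of a GPT state space `S`, there exists an
actual face `F` of `E(S)` such that (i) `F = {e ∈ E(S) : e·ω = 1 for all ω ∈ M}` and
(ii) `F = A^{E(S)}_ω` for every `ω ∈ M`. -/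
theorem stmt_4 (d : ℕ) (hd : 1 ≤ d) (S : Set (Fin (d + 1) → ℝ))
    (hS : IsStateSpace d S) (M : Set (Fin (d + 1) → ℝ))
    (hM : IsMinimalExposedFace S M) :
    ∃ F : Set (Fin (d + 1) → ℝ), IsActualFace d (unrestricted d S) F ∧
      F = {e ∈ unrestricted d S | ∀ ω ∈ M, dot e ω = 1} ∧
      ∀ ω ∈ M, F = actualSet (unrestricted d S) ω := by
  obtain ⟨hMexp, hMmin⟩ := hM
  obtain ⟨hSne, hScomp, hSconv, hSlast⟩ := hS
  have hSstate : IsStateSpace d S := ⟨hSne, hScomp, hSconv, hSlast⟩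
  have hMsub : M ⊆ S := by
    obtain ⟨-, g, μ, -, -, hMeq⟩ := hMexp
    rw [hMeq]; exact fun x hx => hx.1
  obtain ⟨ω0, hω0⟩ := hMexp.1
  -- key spreading property from minimality
  have spread : ∀ e ∈ unrestricted d S, ∀ ω ∈ M, dot e ω = 1 → ∀ ω' ∈ M, dot e ω' = 1 := by
    intro e he ω hω h1 ω' hω'
    have hNexp : IsExposedFace S {σ ∈ S | dot e σ = 1} := by
      refine ⟨⟨ω, hMsub hω, h1⟩, e, 1, ?_, fun σ hσ => (he σ hσ).2, rfl⟩
      intro h0; rw [h0, dot_zero_left] at h1; norm_num at h1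
    rcases hMmin _ hNexp with hMN | hMN
    · have hmem : ω' ∈ M ∩ {σ ∈ S | dot e σ = 1} := hMN.symm ▸ hω'
      exact hmem.2.2
    · exact absurd (hMN ▸ (Set.mem_inter hω ⟨hMsub hω, h1⟩)) (Set.notMem_empty ω)
  set F := actualSet (unrestricted d S) ω0 with hFdef
  have hiff : ∀ ω ∈ M, F = actualSet (unrestricted d S) ω := by
    intro ω hω
    ext e
    constructor
    · rintro ⟨he, h1⟩; exact ⟨he, spread e he ω0 hω0 h1 ω hω⟩
    · rintro ⟨he, h1⟩; exact ⟨he, spread e he ω hω h1 ω0 hω0⟩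
  have hFrep : F = {e ∈ unrestricted d S | ∀ ω ∈ M, dot e ω = 1} := by
    ext e
    constructor
    · rintro ⟨he, h1⟩; exact ⟨he, fun ω hω => spread e he ω0 hω0 h1 ω hω⟩
    · rintro ⟨he, h1⟩; exact ⟨he, h1 ω0 hω0⟩
  have huE : unit d ∈ unrestricted d S := unit_mem_unrestricted hSlast
  have huF : unit d ∈ F := ⟨huE, by rw [dot_unit_left, hSlast ω0 (hMsub hω0)]⟩
  have hω0ne : ω0 ≠ 0 := by
    intro h0
    have := hSlast ω0 (hMsub hω0)
    rw [h0] at this; simp at this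
  have hFexp : IsExposedFace (unrestricted d S) F := by
    refine ⟨⟨unit d, huF⟩, ω0, 1, hω0ne, fun e he => ?_, ?_⟩
    · rw [dot_comm]; exact (he ω0 (hMsub hω0)).2
    · ext e; simp only [hFdef, actualSet, Set.mem_setOf_eq]
      rw [dot_comm e ω0]
  refine ⟨F, ⟨hFexp, huF, ?_⟩, hFrep, hiff⟩
  -- maximality
  intro F' hF' hss
  obtain ⟨hF'ne, h, m, hh0, hhle, hF'eq⟩ := hF'
  have huF' : unit d ∈ F' := hss.subset huF
  have hm : dot h (unit d) = m := by
    have := hF'eq ▸ huF'; exact this.2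
  -- every effect has nonnegative pairing with h
  have hnn : ∀ e ∈ unrestricted d S, 0 ≤ dot h e := by
    intro e he
    have hue : unit d - e ∈ unrestricted d S := by
      intro σ hσ
      rw [dot_sub_left, dot_unit_left, hSlast σ hσ]
      have := he σ hσ
      constructor <;> linarith [this.1, this.2]
    have := hhle _ hue
    rw [dot_sub_right, hm] at this
    linarith
  have hm0 : 0 ≤ m := hm ▸ hnn _ huE
  -- m > 0, else h = 0
  have hmpos : 0 < m := by
    rcases hm0.lt_or_eq with h' | h'
    · exact h'
    · exfalso
      apply hh0
      have hzero : ∀ e ∈ unrestricted d S, dot h e = 0 := fun e he =>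
        le_antisymm (h' ▸ hhle e he) (hnn e he)
      funext j
      obtain ⟨σ1, hσ1, hmax⟩ := hScomp.exists_isMaxOn hSne
        ((continuous_apply j).abs.continuousOn)
      set R := |σ1 j| with hR
      have hR0 : 0 ≤ R := abs_nonneg _
      set ε := (2 * (R + 1))⁻¹ with hε
      have hεpos : 0 < ε := by positivity
      have hεR : ε * (2 * (R + 1)) = 1 := inv_mul_cancel₀ (by positivity)
      set ep := (1/2 : ℝ) • unit d + ε • (Pi.single j (1:ℝ) : Fin (d+1) → ℝ) with hep
      have hdotep : ∀ x : Fin (d+1) → ℝ, dot ep x = (1/2) * x (Fin.last d) + ε * x j := by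
        intro x
        rw [hep, dot_add_left, dot_smul_left, dot_smul_left, dot_unit_left]
        congr 1
        rw [dot_comm, dot_single_right]
      have hepE : ep ∈ unrestricted d S := by
        intro σ hσ
        rw [hdotep, hSlast σ hσ]
        have habs : |σ j| ≤ R := hmax hσ
        have h1 := abs_le.1 habs
        constructor <;> nlinarith [h1.1, h1.2]
      have hlast0 : h (Fin.last d) = 0 := by
        rw [← dot_unit_right d h, hm, h']
      have h3 := hzero ep hepE
      rw [dot_comm, hdotep, hlast0] at h3
      have h4 : ε * h j = 0 := by linarith
      show h j = (0 : Fin (d+1) → ℝ) j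
      rw [Pi.zero_apply]
      exact (mul_eq_zero.1 h4).resolve_left hεpos.ne'
  -- the dual witness state
  set z := m⁻¹ • h with hz
  have hz1 : ∀ e ∈ unrestricted d S, dot e z ≤ 1 := by
    intro e he
    rw [dot_comm, hz, dot_smul_left]
    calc m⁻¹ * dot h e ≤ m⁻¹ * m :=
      mul_le_mul_of_nonneg_left (hhle e he) (inv_pos.2 hmpos).le
    _ = 1 := inv_mul_cancel₀ hmpos.ne'
  have hz2 : z (Fin.last d) = 1 := by
    have hhl : h (Fin.last d) = m := by rw [← dot_unit_right d h, hm]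
    rw [hz]
    simp only [Pi.smul_apply, smul_eq_mul, hhl]
    exact inv_mul_cancel₀ hmpos.ne'
  have hzS : z ∈ S := mem_of_dual hSstate hz1 hz2
  obtain ⟨eM, heME, heMiff⟩ := exposed_effect hSstate hMexp
  have heMF : eM ∈ F := ⟨heME, (heMiff ω0 (hMsub hω0)).1 hω0⟩
  have heMF' : dot h eM = m := by
    have := hF'eq ▸ hss.subset heMF
    exact this.2
  have heMz : dot eM z = 1 := by
    rw [dot_comm, hz, dot_smul_left, heMF']
    exact inv_mul_cancel₀ hmpos.ne'
  have hzM : z ∈ M := (heMiff z hzS).2 heMz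
  have hsub : F' ⊆ F := by
    intro e he'
    have he2 := hF'eq ▸ he'
    rw [hiff z hzM]
    refine ⟨he2.1, ?_⟩
    rw [dot_comm, hz, dot_smul_left, he2.2]
    exact inv_mul_cancel₀ hmpos.ne'
  exact hss.not_subset hsub
end

section
/- Let S be a GPT state space in ℝ^{d+1} and 𝓔 a GPT effect space for S that is noisy unrestricted, meaning that for every e ∈ E(S) there exists 0 < p ≤ 1 with p·e ∈ 𝓔. If every extreme point of S is an exposed point of S, then the GPT system (S, 𝓔) satisfies intermediate determinism. -/
/-!
An exposing functional `h` of a pure state `ω`, shifted by a multiple of the unit effect and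
rescaled, becomes an effect `e ∈ E(S)` taking the value `1` on `S` exactly at `ω`. Noisy
unrestrictedness puts some `p (u - e)` into `𝓔`, hence `u - p (u - e)` too, and this effect still
takes the value `1` on `S` exactly at `ω`. It therefore lies in the actual set of `ω` and in that
of no other state of `S`.
-/

namespace GPT

variable {d : ℕ}

theorem dot_eq_dotProduct {n : ℕ} (x y : Fin n → ℝ) : dot x y = x ⬝ᵥ y := rfl

theorem dot_unit (x : Fin (d + 1) → ℝ) : dot (unit d) x = x (Fin.last d) := by
  simp [dot, unit, ite_mul]

section StateSpace

variable {S : Set (Fin (d + 1) → ℝ)} (hlast : ∀ ω ∈ S, ω (Fin.last d) = 1)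
include hlast

theorem dot_unit_of_mem {x : Fin (d + 1) → ℝ} (hx : x ∈ S) : dot (unit d) x = 1 := by
  rw [dot_unit, hlast x hx]

theorem unit_sub_mem_unrestricted {e : Fin (d + 1) → ℝ} (he : e ∈ unrestricted d S) :
    unit d - e ∈ unrestricted d S := by
  intro x hx
  obtain ⟨he₀, he₁⟩ := he x hx
  rw [dot_eq_dotProduct, sub_dotProduct, ← dot_eq_dotProduct, ← dot_eq_dotProduct,
    dot_unit_of_mem hlast hx]
  constructor <;> linarith

theorem exists_unrestricted_eq_one_iff (hS : IsCompact S) {h : Fin (d + 1) → ℝ} {m : ℝ}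
    (hne : S.Nonempty) (hle : ∀ c ∈ S, dot h c ≤ m) :
    ∃ e ∈ unrestricted d S, ∀ x ∈ S, dot e x = 1 ↔ dot h x = m := by
  have hcont : Continuous fun x => dot h x := continuous_const.dotProduct continuous_id
  obtain ⟨x₀, hx₀, hmin⟩ := hS.exists_isMinOn hne hcont.continuousOn
  set α := dot h x₀
  rcases (hle x₀ hx₀).eq_or_lt with hαm | hαm
  · -- `h` is constant on `S`, so the unit effect will do.
    refine ⟨unit d, fun x hx => ?_, fun x hx => ?_⟩
    · simp [dot_unit_of_mem hlast hx]
    · have : α ≤ dot h x := hmin hx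
      simp only [dot_unit_of_mem hlast hx, true_iff]
      linarith [hle x hx]
  · have ht : 0 < m - α := sub_pos.mpr hαm
    have hdot : ∀ x ∈ S, dot ((m - α)⁻¹ • (h - α • unit d)) x = (dot h x - α) / (m - α) := by
      intro x hx
      simp only [dot_eq_dotProduct, smul_dotProduct, sub_dotProduct]
      rw [← dot_eq_dotProduct (unit d), dot_unit_of_mem hlast hx, smul_eq_mul, smul_eq_mul]
      field_simp
    refine ⟨(m - α)⁻¹ • (h - α • unit d), fun x hx => ?_, fun x hx => ?_⟩
    · have : α ≤ dot h x := hmin hx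
      rw [hdot x hx, div_le_one ht]
      exact ⟨div_nonneg (sub_nonneg.mpr this) ht.le, by linarith [hle x hx]⟩
    · rw [hdot x hx, div_eq_one_iff_eq ht.ne', sub_left_inj]

theorem exists_mem_eq_one_iff_of_noisy {𝓔 : Set (Fin (d + 1) → ℝ)}
    (h𝓔 : ∀ e ∈ 𝓔, unit d - e ∈ 𝓔)
    (hNU : ∀ e ∈ unrestricted d S, ∃ p : ℝ, 0 < p ∧ p ≤ 1 ∧ p • e ∈ 𝓔)
    {e : Fin (d + 1) → ℝ} (he : e ∈ unrestricted d S) :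
    ∃ f ∈ 𝓔, ∀ x ∈ S, dot f x = 1 ↔ dot e x = 1 := by
  obtain ⟨p, hp, -, hpe⟩ := hNU _ (unit_sub_mem_unrestricted hlast he)
  refine ⟨unit d - p • (unit d - e), h𝓔 _ hpe, fun x hx => ?_⟩
  have hu := dot_unit_of_mem hlast hx
  simp only [dot_eq_dotProduct, sub_dotProduct, smul_dotProduct, smul_eq_mul] at hu ⊢
  rw [hu]
  -- `1 - f·x = p (1 - e·x)` with `p > 0`
  constructor
  · intro h1
    nlinarith
  · intro h1
    rw [h1]
    ring

end StateSpace

end GPT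

open GPT in
theorem stmt_7_general (d : ℕ) (S 𝓔 : Set (Fin (d + 1) → ℝ))
    (hS : IsStateSpace d S) (h𝓔 : IsEffectSpace d S 𝓔)
    (hNU : ∀ e ∈ unrestricted d S, ∃ p : ℝ, 0 < p ∧ p ≤ 1 ∧ p • e ∈ 𝓔)
    (hexp : ∀ ω ∈ S.extremePoints ℝ, IsExposedPoint S ω) :
    IntermediateDeterminism d S 𝓔 := by
  obtain ⟨-, hScpt, -, hlast⟩ := hS
  intro ω hω ω' hω' hA
  obtain ⟨-, h, m, -, hle, hface⟩ := hexp ω hω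
  have hωm : ω ∈ {x ∈ S | dot h x = m} := hface ▸ rfl
  obtain ⟨e, he, heq⟩ := exists_unrestricted_eq_one_iff hlast hScpt ⟨ω, hωm.1⟩ hle
  obtain ⟨f, hf, hfeq⟩ := exists_mem_eq_one_iff_of_noisy hlast h𝓔.2.2.2.2.1 hNU he
  have hfω : f ∈ actualSet 𝓔 ω := ⟨hf, (hfeq ω hωm.1).2 ((heq ω hωm.1).2 hωm.2)⟩
  rw [← hA] at hfω
  have hω'm : ω' ∈ {x ∈ S | dot h x = m} := ⟨hω', (heq ω' hω').1 ((hfeq ω' hω').1 hfω.2)⟩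
  rw [← hface] at hω'm
  exact hω'm

open GPT in
/-- A noisy unrestricted GPT system all of whose extreme states are exposed
satisfies intermediate determinism. -/
theorem stmt_7 (d : ℕ) (hd : 1 ≤ d) (S 𝓔 : Set (Fin (d + 1) → ℝ))
    (hS : IsStateSpace d S) (h𝓔 : IsEffectSpace d S 𝓔)
    (hNU : ∀ e ∈ unrestricted d S, ∃ p : ℝ, 0 < p ∧ p ≤ 1 ∧ p • e ∈ 𝓔)
    (hexp : ∀ ω ∈ S.extremePoints ℝ, IsExposedPoint S ω) :
    IntermediateDeterminism d S 𝓔 :=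
  stmt_7_general d S 𝓔 hS h𝓔 hNU hexp
end

section
/- Let Π be a rank-one orthogonal projection on ℂ². Define w : P(ℂ²) → [0,1] by w(0) = 0, w(I) = 1, w(Π) = 1, w(I − Π) = 0, and w(Π') = 1/2 for every rank-one projection Π' ∉ {Π, I − Π}; and define v₁ : P(ℂ²) → [0,1] by v₁(Π') = Tr(Π'Π). Then both w and v₁ are generalized probability measures on P(ℂ²), w ≠ v₁, and they have the same actual set A_w = A_{v₁} = {Π, I}. -/
open scoped ComplexInnerProductSpace Classical

namespace QT2

/-- The two-dimensional complex Hilbert space `ℂ²`. -/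
abbrev H2 : Type := EuclideanSpace ℂ (Fin 2)

/-- Bounded operators on `ℂ²`. -/
abbrev Op : Type := H2 →L[ℂ] H2

/-- An orthogonal projection on `ℂ²`: a self-adjoint idempotent operator. -/
def IsOrthProj (P : Op) : Prop := IsSelfAdjoint P ∧ P ∘L P = P

/-- The orthogonal projection onto a subspace of `ℂ²`, as an operator. -/
noncomputable def projOnto (K : Submodule ℂ H2) : Op :=
  K.subtypeL ∘L K.orthogonalProjectionOnto

/-- A generalized probability measure on `P(ℂ²)`: a `[0,1]`-valued assignment with
`v(I) = 1` that is additive on finite sequences of pairwise orthogonal projections whose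
sum is a projection. -/
def IsGPM2 (v : Op → ℝ) : Prop :=
  (∀ P, IsOrthProj P → v P ∈ Set.Icc (0 : ℝ) 1) ∧
  v 1 = 1 ∧
  ∀ (n : ℕ) (Ps : Fin n → Op),
    (∀ j, IsOrthProj (Ps j)) →
    (Pairwise fun i j => Ps i ∘L Ps j = 0) →
    IsOrthProj (∑ j, Ps j) →
    v (∑ j, Ps j) = ∑ j, v (Ps j)

/-- A Gisin measure on `P(ℂ²)`: a generalized probability measure such that, whenever every
member of a set `K` of projections is assigned probability one, so is the projection onto the
intersection of the ranges of the members of `K`. -/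
def IsGisin (v : Op → ℝ) : Prop :=
  IsGPM2 v ∧
  ∀ K : Set Op, (∀ P ∈ K, IsOrthProj P) → (∀ P ∈ K, v P = 1) →
    v (projOnto (⨅ P ∈ K, LinearMap.range (P : H2 →ₗ[ℂ] H2))) = 1

end QT2

/-!
In `ℂ²` the trace of an orthogonal projection is its rank, so if projections `Πⱼ` sum to a
projection then at most two of them are nonzero, and two nonzero ones are complementary,
`Π` and `I - Π`. Hence a `[0,1]`-valued `v` with `v 0 = 0`, `v I = 1` and
`v Π + v (I - Π) = 1` is already a generalized probability measure; `w` is of this kind.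

Writing `Π₀ = |u⟩⟨u|` with `‖u‖ = 1`, one has `v₁ Π = ⟪u, Π u⟫ = ‖Π u‖²`, which is additive
in `Π` and equals `1` exactly when `Π u = u`, i.e. when the range of `Π` contains `u`; in `ℂ²`
this leaves `Π₀` and `I`. The two measures differ on the projection onto `2u + f`, with `f` a
unit vector orthogonal to `u`, where `v₁` takes the value `4/5`, which `w` never takes.
-/

open Module LinearMap InnerProductSpace ContinuousLinearMap Finset

theorem LinearMap.finrank_range_sum_of_isIdempotentElem {K V ι : Type*} [Field K] [CharZero K]
    [AddCommGroup V] [Module K V] [FiniteDimensional K V] (s : Finset ι) {f : ι → Module.End K V}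
    (hf : ∀ i ∈ s, IsIdempotentElem (f i)) (hs : IsIdempotentElem (∑ i ∈ s, f i)) :
    finrank K (range (∑ i ∈ s, f i)) = ∑ i ∈ s, finrank K (range (f i)) := by
  apply Nat.cast_injective (R := K)
  rw [← hs.isProj_range.trace, map_sum, Nat.cast_sum]
  exact Finset.sum_congr rfl fun i hi => (hf i hi).isProj_range.trace

section InnerProductSpace

variable {𝕜 E : Type*} [RCLike 𝕜] [NormedAddCommGroup E] [InnerProductSpace 𝕜 E]

theorem Submodule.starProjection_span_singleton_eq_rankOne {u : E} (hu : ‖u‖ = 1) :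
    (𝕜 ∙ u).starProjection = rankOne 𝕜 u u :=
  ContinuousLinearMap.ext (Submodule.starProjection_unit_singleton 𝕜 hu)

theorem trace_comp_rankOne [FiniteDimensional 𝕜 E] (T : E →L[𝕜] E) (x y : E) :
    trace 𝕜 E (T ∘L rankOne 𝕜 x y : E →L[𝕜] E) = inner 𝕜 y (T x) := by
  rw [comp_rankOne, trace_rankOne]

theorem exists_norm_eq_one_inner_eq_zero [FiniteDimensional 𝕜 E] (h : 1 < finrank 𝕜 E) (u : E) :
    ∃ f : E, ‖f‖ = 1 ∧ inner 𝕜 u f = 0 := by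
  have hperp : (𝕜 ∙ u)ᗮ ≠ ⊥ := by
    intro hbot
    have hsum := Submodule.finrank_add_finrank_orthogonal (𝕜 ∙ u)
    have hspan : finrank 𝕜 (𝕜 ∙ u) ≤ 1 := (finrank_span_le_card ({u} : Set E)).trans (by simp)
    rw [hbot, finrank_bot] at hsum
    omega
  obtain ⟨g, hg, hg0⟩ := Submodule.exists_mem_ne_zero_of_ne_bot hperp
  refine ⟨(‖g‖ : 𝕜)⁻¹ • g, norm_smul_inv_norm hg0, ?_⟩
  rw [inner_smul_right, Submodule.mem_orthogonal_singleton_iff_inner_right.1 hg, mul_zero]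

variable [CompleteSpace E] {p : E →L[𝕜] E}

theorem IsStarProjection.eq_rankOne_of_range_eq {u : E} (hu : ‖u‖ = 1) (hp : IsStarProjection p)
    (h : range (p : E →ₗ[𝕜] E) = 𝕜 ∙ u) : p = rankOne 𝕜 u u := by
  rw [← Submodule.starProjection_span_singleton_eq_rankOne hu]
  exact (ContinuousLinearMap.IsStarProjection.ext_iff hp isStarProjection_starProjection).2
    (by rw [Submodule.range_starProjection, h])

theorem IsStarProjection.exists_eq_rankOne [FiniteDimensional 𝕜 E]
    (hp : IsStarProjection p) (h : finrank 𝕜 (range (p : E →ₗ[𝕜] E)) = 1) :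
    ∃ u, ‖u‖ = 1 ∧ p = rankOne 𝕜 u u := by
  obtain ⟨v, hv, hv0⟩ := Submodule.exists_mem_ne_zero_of_ne_bot (p := range (p : E →ₗ[𝕜] E))
    (by rintro h'; rw [h', finrank_bot] at h; exact zero_ne_one h)
  have hu : ‖((‖v‖ : 𝕜)⁻¹ • v)‖ = 1 := norm_smul_inv_norm hv0
  refine ⟨_, hu, hp.eq_rankOne_of_range_eq hu (Submodule.eq_of_le_of_finrank_eq
      ((Submodule.span_singleton_le_iff_mem _ _).2 (Submodule.smul_mem _ _ hv))
      ?_).symm⟩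
  rw [finrank_span_singleton (norm_ne_zero_iff.1 (by simp [hu])), h]

theorem IsStarProjection.re_inner_apply_eq_norm_sq (hp : IsStarProjection p) (x : E) :
    RCLike.re (inner 𝕜 x (p x)) = ‖p x‖ ^ 2 := by
  have hpp : p (p x) = p x := congr($(hp.isIdempotentElem.eq) x)
  calc RCLike.re (inner 𝕜 x (p x)) = RCLike.re (inner 𝕜 x (p (p x))) := by rw [hpp]
    _ = RCLike.re (inner 𝕜 (p x) (p x)) := congrArg _ (hp.isSelfAdjoint.isSymmetric x (p x)).symm
    _ = ‖p x‖ ^ 2 := inner_self_eq_norm_sq _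

theorem IsStarProjection.norm_apply_le (hp : IsStarProjection p) (x : E) : ‖p x‖ ≤ ‖x‖ := by
  obtain ⟨_, hp'⟩ := isStarProjection_iff_eq_starProjection_range.1 hp
  rw [hp']
  exact Submodule.norm_starProjection_apply_le _ x

theorem IsStarProjection.norm_apply_eq_iff (hp : IsStarProjection p) (x : E) :
    ‖p x‖ = ‖x‖ ↔ p x = x := by
  obtain ⟨_, hp'⟩ := isStarProjection_iff_eq_starProjection_range.1 hp
  rw [hp', ← Submodule.mem_iff_norm_starProjection, Submodule.starProjection_eq_self_iff]

end InnerProductSpace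

namespace QT2

theorem isOrthProj_iff {P : Op} : IsOrthProj P ↔ IsStarProjection P :=
  ⟨fun h => ⟨h.2, h.1⟩, fun h => ⟨h.2, h.1⟩⟩

theorem isOrthProj_one : IsOrthProj 1 := isOrthProj_iff.2 (.one Op)

def actualSet (v : Op → ℝ) : Set Op := {Q | IsOrthProj Q ∧ v Q = 1}

theorem actualSet_eq_pair {v : Op → ℝ} {P0 : Op} (hP0 : IsOrthProj P0)
    (hv : ∀ Q, IsOrthProj Q → (v Q = 1 ↔ Q = P0 ∨ Q = 1)) : actualSet v = {P0, 1} := by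
  ext Q
  refine ⟨fun h => (hv Q h.1).1 h.2, fun h => ?_⟩
  have hQ : IsOrthProj Q := h.elim (· ▸ hP0) (· ▸ isOrthProj_one)
  exact ⟨hQ, (hv Q hQ).2 h⟩

theorem finrank_range_le_two (Q : Op) : finrank ℂ (range (Q : H2 →ₗ[ℂ] H2)) ≤ 2 :=
  (Submodule.finrank_le _).trans_eq finrank_euclideanSpace_fin

theorem one_le_finrank_range {Q : Op} (hQ : Q ≠ 0) : 1 ≤ finrank ℂ (range (Q : H2 →ₗ[ℂ] H2)) :=
  Submodule.one_le_finrank_iff.2 fun h => hQ (coe_injective (LinearMap.range_eq_bot.1 h))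

theorem IsOrthProj.eq_one_of_two_le_finrank_range {Q : Op} (hQ : IsOrthProj Q)
    (h : 2 ≤ finrank ℂ (range (Q : H2 →ₗ[ℂ] H2))) : Q = 1 := by
  have htop : range (Q : H2 →ₗ[ℂ] H2) = ⊤ := Submodule.eq_top_of_finrank_eq
    (by rw [finrank_euclideanSpace_fin]; exact (finrank_range_le_two Q).antisymm h)
  exact (ContinuousLinearMap.IsStarProjection.ext_iff (isOrthProj_iff.1 hQ) (.one Op)).2
    (htop.trans (LinearMap.range_eq_top.2 fun x => ⟨x, rfl⟩).symm)

theorem card_le_finrank_range_sum {ι : Type*} {s : Finset ι} {Ps : ι → Op}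
    (hPs : ∀ j ∈ s, IsOrthProj (Ps j) ∧ Ps j ≠ 0) (hsum : IsOrthProj (∑ j ∈ s, Ps j)) :
    #s ≤ finrank ℂ (range ((∑ j ∈ s, Ps j : Op) : H2 →ₗ[ℂ] H2)) := by
  rw [toLinearMap_sum, finrank_range_sum_of_isIdempotentElem s
    (fun j hj => (isOrthProj_iff.1 (hPs j hj).1).isIdempotentElem.toLinearMap)
    (toLinearMap_sum s Ps ▸ (isOrthProj_iff.1 hsum).isIdempotentElem.toLinearMap),
    card_eq_sum_ones]
  exact sum_le_sum fun j hj => one_le_finrank_range (hPs j hj).2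

theorem ne_zero_and_ne_one_of_finrank_range_eq_one {P : Op}
    (h : finrank ℂ (range (P : H2 →ₗ[ℂ] H2)) = 1) : P ≠ 0 ∧ P ≠ 1 := by
  refine ⟨?_, ?_⟩ <;> rintro rfl
  · rw [toLinearMap_zero, LinearMap.range_zero, finrank_bot] at h
    exact zero_ne_one h
  · rw [toLinearMap_one, Module.End.one_eq_id, LinearMap.range_id, finrank_top,
      finrank_euclideanSpace_fin] at h
    exact OfNat.ofNat_ne_one 2 h

theorem isGPM2_of_add_one_sub {v : Op → ℝ} (hIcc : ∀ P, IsOrthProj P → v P ∈ Set.Icc 0 1)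
    (h0 : v 0 = 0) (h1 : v 1 = 1)
    (hcompl : ∀ A, IsOrthProj A → A ≠ 0 → A ≠ 1 → v A + v (1 - A) = 1) : IsGPM2 v := by
  refine ⟨hIcc, h1, fun n Ps hPs _ hsum => ?_⟩
  set s := univ.filter fun j => Ps j ≠ 0
  have hsumPs : ∑ j, Ps j = ∑ j ∈ s, Ps j := (sum_filter_ne_zero _).symm
  have hsumv : ∑ j, v (Ps j) = ∑ j ∈ s, v (Ps j) :=
    (sum_filter_of_ne (p := fun j => Ps j ≠ 0) fun j _ hv hj => hv (by simp [hj, h0])).symm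
  rw [hsumPs] at hsum
  rw [hsumPs, hsumv]
  have hs : ∀ j ∈ s, IsOrthProj (Ps j) ∧ Ps j ≠ 0 := fun j hj => ⟨hPs j, (mem_filter.1 hj).2⟩
  have hcard := card_le_finrank_range_sum hs hsum
  obtain h | h | h : #s = 0 ∨ #s = 1 ∨ #s = 2 := by
    have := finrank_range_le_two (∑ j ∈ s, Ps j); omega
  · simp [card_eq_zero.1 h, h0]
  · obtain ⟨a, ha⟩ := card_eq_one.1 h
    simp [ha]
  · obtain ⟨a, b, hab, hs2⟩ := card_eq_two.1 h
    obtain ⟨ha, ha0⟩ := hs a (by simp [hs2])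
    have hb0 : Ps b ≠ 0 := (hs b (by simp [hs2])).2
    rw [h] at hcard
    rw [hs2, sum_pair hab] at hsum hcard
    rw [hs2, sum_pair hab, sum_pair hab]
    have hone : Ps a + Ps b = 1 := hsum.eq_one_of_two_le_finrank_range hcard
    rw [hone, h1, eq_sub_of_add_eq' hone]
    exact (hcompl _ ha ha0 fun ha1 => hb0 (add_eq_left.1 (ha1 ▸ hone))).symm

noncomputable def halfMeasure (P0 Q : Op) : ℝ :=
  if Q = P0 then 1 else if Q = 1 then 1 else if Q = 0 then 0 else if Q = 1 - P0 then 0 else 1 / 2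

section HalfMeasure

variable {P0 : Op}

theorem halfMeasure_mem (Q : Op) : halfMeasure P0 Q ∈ ({0, 1 / 2, 1} : Set ℝ) := by
  unfold halfMeasure; split_ifs <;> simp

theorem halfMeasure_eq_one_iff {Q : Op} : halfMeasure P0 Q = 1 ↔ Q = P0 ∨ Q = 1 := by
  unfold halfMeasure; split_ifs <;> simp_all

theorem halfMeasure_self : halfMeasure P0 P0 = 1 := by
  simp [halfMeasure]

theorem halfMeasure_zero (h0 : P0 ≠ 0) : halfMeasure P0 0 = 0 := by
  simp [halfMeasure, h0.symm]

theorem halfMeasure_one (h1 : P0 ≠ 1) : halfMeasure P0 1 = 1 := by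
  simp [halfMeasure, h1.symm]

theorem halfMeasure_one_sub_self (hP0 : IsIdempotentElem P0) (h0 : P0 ≠ 0) (h1 : P0 ≠ 1) :
    halfMeasure P0 (1 - P0) = 0 := by
  have hne : 1 - P0 ≠ P0 := fun h => h0 (by
    rw [← hP0.eq]; nth_rw 2 [← h]; exact hP0.mul_one_sub_self)
  simp [halfMeasure, hne, sub_eq_self, h0, sub_eq_zero, h1.symm]

theorem halfMeasure_of_ne {A : Op} (hP : A ≠ P0) (h1 : A ≠ 1) (h0 : A ≠ 0) (hP' : A ≠ 1 - P0) :
    halfMeasure P0 A = 1 / 2 := by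
  simp [halfMeasure, hP, h1, h0, hP']

theorem halfMeasure_add_one_sub (hP0 : IsIdempotentElem P0) (h0 : P0 ≠ 0) (h1 : P0 ≠ 1) {A : Op}
    (hA0 : A ≠ 0) (hA1 : A ≠ 1) : halfMeasure P0 A + halfMeasure P0 (1 - A) = 1 := by
  by_cases hP : A = P0
  · rw [hP, halfMeasure_self, halfMeasure_one_sub_self hP0 h0 h1, add_zero]
  by_cases hP' : A = 1 - P0
  · rw [hP', sub_sub_cancel, halfMeasure_self, halfMeasure_one_sub_self hP0 h0 h1, zero_add]
  rw [halfMeasure_of_ne hP hA1 hA0 hP', halfMeasure_of_ne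
    (fun h => hP' (by rw [← h, sub_sub_cancel])) (fun h => hA0 (sub_eq_self.1 h))
    (fun h => hA1 (sub_eq_zero.1 h).symm) (fun h => hP (sub_right_inj.1 h))]
  norm_num

theorem isGPM2_halfMeasure (hP0 : IsIdempotentElem P0) (h0 : P0 ≠ 0) (h1 : P0 ≠ 1) :
    IsGPM2 (halfMeasure P0) := by
  refine isGPM2_of_add_one_sub (fun P _ => ?_) (halfMeasure_zero h0) (halfMeasure_one h1)
    fun A _ => halfMeasure_add_one_sub hP0 h0 h1
  obtain h | h | h : _ = 0 ∨ _ = 1 / 2 ∨ _ = 1 := halfMeasure_mem (P0 := P0) P <;>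
    norm_num [h]

end HalfMeasure

section PureState

variable {u : H2}

theorem isGPM2_re_inner_apply (hu : ‖u‖ = 1) : IsGPM2 fun Q => (⟪u, Q u⟫).re := by
  refine ⟨fun P hP => ?_, by simp [inner_self_eq_norm_sq_to_K, hu], fun n Ps _ _ _ => ?_⟩
  · have hP' := isOrthProj_iff.1 hP
    have hle : ‖P u‖ ≤ 1 := hu ▸ hP'.norm_apply_le u
    change (⟪u, P u⟫).re ∈ Set.Icc 0 1
    rw [Set.mem_Icc, show (⟪u, P u⟫).re = ‖P u‖ ^ 2 from hP'.re_inner_apply_eq_norm_sq u]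
    exact ⟨by positivity, pow_le_one₀ (norm_nonneg _) hle⟩
  · simp [Complex.re_sum]

theorem re_inner_apply_eq_one_iff (hu : ‖u‖ = 1) {Q : Op} (hQ : IsOrthProj Q) :
    (⟪u, Q u⟫).re = 1 ↔ Q = rankOne ℂ u u ∨ Q = 1 := by
  have hQ' := isOrthProj_iff.1 hQ
  refine ⟨fun h => ?_, by rintro (rfl | rfl) <;> simp [inner_self_eq_norm_sq_to_K, hu]⟩
  have hQu : Q u = u := by
    rw [show (⟪u, Q u⟫).re = ‖Q u‖ ^ 2 from hQ'.re_inner_apply_eq_norm_sq u] at h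
    rw [← hQ'.norm_apply_eq_iff, hu]
    exact (pow_eq_one_iff_of_nonneg (norm_nonneg _) two_ne_zero).1 h
  have hle : (ℂ ∙ u) ≤ range (Q : H2 →ₗ[ℂ] H2) :=
    (Submodule.span_singleton_le_iff_mem _ _).2 ⟨u, hQu⟩
  have hspan : finrank ℂ (ℂ ∙ u) = 1 := finrank_span_singleton (norm_ne_zero_iff.1 (by simp [hu]))
  rcases (Submodule.finrank_mono hle).eq_or_lt with h1 | h2
  · exact .inl (hQ'.eq_rankOne_of_range_eq hu (Submodule.eq_of_le_of_finrank_eq hle h1).symm)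
  · exact .inr (hQ.eq_one_of_two_le_finrank_range (by rwa [hspan] at h2))

theorem exists_isOrthProj_re_inner_apply_eq (hu : ‖u‖ = 1) :
    ∃ Q : Op, IsOrthProj Q ∧ (⟪u, Q u⟫).re = 4 / 5 := by
  obtain ⟨f, hf, huf⟩ := exists_norm_eq_one_inner_eq_zero (𝕜 := ℂ) (by simp) u
  set e : H2 := (2 : ℂ) • u + f
  have hue : ⟪u, e⟫ = 2 := by simp [e, huf, inner_self_eq_norm_sq_to_K, hu]
  have he : ‖e‖ ^ 2 = 5 := by
    rw [norm_add_sq (𝕜 := ℂ), inner_smul_left, huf, norm_smul, hf, hu]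
    norm_num
  refine ⟨(ℂ ∙ e).starProjection, isOrthProj_iff.2 isStarProjection_starProjection, ?_⟩
  rw [Submodule.starProjection_singleton, inner_smul_right, hue, ← inner_conj_symm, hue, he]
  norm_num

end PureState

end QT2

open QT2 in
/-- For a rank-one projection `Π₀` on `ℂ²`, the map `w` assigning `1` to `Π₀`
and `I`, `0` to `0` and `I − Π₀`, and `1/2` to every other rank-one projection, and the map
`v₁ : Q ↦ Tr(QΠ₀)`, are both generalized probability measures on `P(ℂ²)`; they differ on some
projection yet have the same actual set `{Π₀, I}`. -/
theorem stmt_17 (P0 : Op) (hP0 : IsOrthProj P0)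
    (hrank : Module.finrank ℂ (LinearMap.range (P0 : H2 →ₗ[ℂ] H2)) = 1)
    (w v₁ : Op → ℝ)
    (hw : w = fun Q =>
      if Q = P0 then 1 else if Q = 1 then 1 else if Q = 0 then 0
      else if Q = 1 - P0 then 0 else 1 / 2)
    (hv₁ : v₁ = fun Q => (LinearMap.trace ℂ H2 ((Q ∘L P0 : Op) : H2 →ₗ[ℂ] H2)).re) :
    IsGPM2 w ∧ IsGPM2 v₁ ∧ (∃ Q, IsOrthProj Q ∧ w Q ≠ v₁ Q) ∧
      {Q | IsOrthProj Q ∧ w Q = 1} = {Q | IsOrthProj Q ∧ v₁ Q = 1} ∧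
      {Q | IsOrthProj Q ∧ w Q = 1} = {P0, (1 : Op)} := by
  obtain ⟨h0, h1⟩ := ne_zero_and_ne_one_of_finrank_range_eq_one hrank
  have hP0' := isOrthProj_iff.1 hP0
  have hGPMw : IsGPM2 w := hw ▸ isGPM2_halfMeasure hP0'.isIdempotentElem h0 h1
  have hAw : actualSet w = {P0, 1} :=
    actualSet_eq_pair hP0 fun Q _ => by rw [hw]; exact halfMeasure_eq_one_iff
  have hw_mem : ∀ Q, w Q ∈ ({0, 1 / 2, 1} : Set ℝ) := hw ▸ halfMeasure_mem
  obtain ⟨u, hu, rfl⟩ := hP0'.exists_eq_rankOne hrank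
  have hv : v₁ = fun Q => (⟪u, Q u⟫).re := by simp only [hv₁, trace_comp_rankOne]
  have hAv : actualSet v₁ = {rankOne ℂ u u, 1} :=
    hv ▸ actualSet_eq_pair hP0 fun Q hQ => re_inner_apply_eq_one_iff hu hQ
  obtain ⟨Q, hQ, hQv⟩ := exists_isOrthProj_re_inner_apply_eq hu
  refine ⟨hGPMw, hv ▸ isGPM2_re_inner_apply hu, ⟨Q, hQ, ?_⟩, hAw.trans hAv.symm, hAw⟩
  obtain h | h | h : w Q = 0 ∨ w Q = 1 / 2 ∨ w Q = 1 := hw_mem Q <;> norm_num [h, hv, hQv]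
end
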